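/- For every p ∈ (0,1) and every integer n ≥ 1, ∫₀^∞ (1 − (1 − p^z)^n) dz = (1/log(1/p)) · Σ_{i=1}^n (1/i), where the integral is over z ∈ [0,∞) and p^z = exp(z · log p). -/

import Mathlib

/-!
Since `1 - (1 - x)^n = x · ∑_{k<n} (1 - x)^k`, the integrand splits into the terms
`p^z (1 - p^z)^k`, and `(1 - p^z)^(k+1) / ((k+1) log(1/p))` is an antiderivative of the `k`-th one
that vanishes at `0` and tends to `1 / ((k+1) log(1/p))` at infinity.
-/

open MeasureTheory Real Set Filter Topology

lemma one_sub_one_sub_pow_eq_mul_geom_sum {R : Type*} [CommRing R] (x : R) (n : ℕ) :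
    1 - (1 - x) ^ n = x * ∑ k ∈ Finset.range n, (1 - x) ^ k := by
  simpa using (mul_neg_geom_sum (1 - x) n).symm

namespace Real

variable {p : ℝ}

lemma integrableOn_const_rpow_Ioi (hp0 : 0 < p) (hp1 : p < 1) (a : ℝ) :
    IntegrableOn (fun z : ℝ => p ^ z) (Ioi a) := by
  simp_rw [rpow_def_of_pos hp0]
  exact integrableOn_exp_mul_Ioi (log_neg hp0 hp1) a

lemma integrableOn_const_rpow_mul_one_sub_const_rpow_pow_Ioi (hp0 : 0 < p) (hp1 : p < 1)
    (k : ℕ) : IntegrableOn (fun z : ℝ => p ^ z * (1 - p ^ z) ^ k) (Ioi 0) := by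
  refine (integrableOn_const_rpow_Ioi hp0 hp1 0).mono' (by fun_prop) ?_
  filter_upwards [ae_restrict_mem measurableSet_Ioi] with z (hz : 0 < z)
  have hpz0 : 0 < p ^ z := rpow_pos_of_pos hp0 z
  have hpz1 : p ^ z ≤ 1 := rpow_le_one hp0.le hp1.le hz.le
  rw [norm_of_nonneg (by positivity)]
  exact mul_le_of_le_one_right hpz0.le (pow_le_one₀ (by linarith) (by linarith))

lemma integral_const_rpow_mul_one_sub_const_rpow_pow_Ioi (hp0 : 0 < p) (hp1 : p < 1) (k : ℕ) :
    ∫ z in Ioi (0 : ℝ), p ^ z * (1 - p ^ z) ^ k = 1 / (log (1 / p) * (k + 1)) := by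
  have hlog : log p ≠ 0 := (log_neg hp0 hp1).ne
  set F : ℝ → ℝ := fun z => (1 - p ^ z) ^ (k + 1) / (log (1 / p) * (k + 1))
  have hderiv (z : ℝ) : HasDerivAt F (p ^ z * (1 - p ^ z) ^ k) z := by
    refine ((((hasStrictDerivAt_const_rpow hp0 z).hasDerivAt.const_sub 1).pow (k + 1)).div_const
      (log (1 / p) * (k + 1))).congr_deriv ?_
    rw [one_div, log_inv]
    field_simp
    push_cast
    ring
  have hlim : Tendsto F atTop (𝓝 (1 / (log (1 / p) * (k + 1)))) := by
    simpa [F] using (((tendsto_rpow_atTop_of_base_lt_one p (by linarith) hp1).const_sub 1).pow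
      (k + 1)).div_const (log (1 / p) * (k + 1))
  rw [integral_Ioi_of_hasDerivAt_of_tendsto (hderiv 0).continuousAt.continuousWithinAt
    (fun z _ => hderiv z) (integrableOn_const_rpow_mul_one_sub_const_rpow_pow_Ioi hp0 hp1 k) hlim]
  simp [F]

end Real

theorem integral_one_sub_one_sub_rpow_pow_general
    (p : ℝ) (hp0 : 0 < p) (hp1 : p < 1) (n : ℕ) :
    ∫ z in Set.Ioi (0 : ℝ), (1 - (1 - p ^ z) ^ n) =
      (1 / Real.log (1 / p)) * ∑ i ∈ Finset.range n, (1 : ℝ) / (i + 1) := by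
  simp_rw [one_sub_one_sub_pow_eq_mul_geom_sum, Finset.mul_sum]
  rw [integral_finsetSum _ fun k _ =>
    integrableOn_const_rpow_mul_one_sub_const_rpow_pow_Ioi hp0 hp1 k]
  refine Finset.sum_congr rfl fun k _ => ?_
  rw [integral_const_rpow_mul_one_sub_const_rpow_pow_Ioi hp0 hp1 k]
  field_simp

/-- For `p ∈ (0,1)` and `n ≥ 1`,
`∫₀^∞ (1 − (1 − p^z)^n) dz = (1/log(1/p)) · Σ_{i=1}^n 1/i`. -/
theorem integral_one_sub_one_sub_rpow_pow
    (p : ℝ) (hp0 : 0 < p) (hp1 : p < 1) (n : ℕ) (hn : 1 ≤ n) :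
    ∫ z in Set.Ioi (0 : ℝ), (1 - (1 - p ^ z) ^ n) =
      (1 / Real.log (1 / p)) * ∑ i ∈ Finset.range n, (1 : ℝ) / (i + 1) :=
  integral_one_sub_one_sub_rpow_pow_general p hp0 hp1 n
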